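/- Let ω = e^{iπ/4} and let Ω : ℤ[A, A^{-1}] → ℤ[ω] be the ring homomorphism sending A to ω. Then the image under Ω of the ideal ⟨9, 4 + A^4⟩ of ℤ[A, A^{-1}], intersected with ℤ, equals the ideal 3ℤ. -/
import Mathlib

open LaurentPolynomial Polynomial

/-- ℤ[ω] ≅ ℤ[X]/(X⁴ + 1), where ω is a primitive 8th root of unity. -/
noncomputable abbrev Zomega : Type := AdjoinRoot ((X : ℤ[X]) ^ 4 + 1)

/-- ω, a primitive 8th root of unity. -/
noncomputable def omega : Zomega := AdjoinRoot.root _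

lemma omega_pow_four : omega ^ 4 = -1 := by
  have h : omega ^ 4 + 1 = 0 := by
    show AdjoinRoot.mk _ X ^ 4 + 1 = 0
    rw [← map_pow, ← map_one (AdjoinRoot.mk ((X : ℤ[X]) ^ 4 + 1)), ← map_add,
      AdjoinRoot.mk_self]
  linear_combination h

noncomputable abbrev S3 : Type := AdjoinRoot ((X : (ZMod 3)[X]) ^ 4 + 1)

noncomputable def phi : Zomega →+* S3 :=
  AdjoinRoot.lift (Int.castRingHom S3) (AdjoinRoot.root _) (by
    have h : (AdjoinRoot.root ((X : (ZMod 3)[X]) ^ 4 + 1)) ^ 4 + 1 = 0 := by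
      show AdjoinRoot.mk _ X ^ 4 + 1 = 0
      rw [← map_pow, ← map_one (AdjoinRoot.mk ((X : (ZMod 3)[X]) ^ 4 + 1)), ← map_add,
        AdjoinRoot.mk_self]
    simp [eval₂_add, eval₂_pow, h])

lemma intCast_mem_span_three (n : ℤ) (h : (n : Zomega) ∈ Ideal.span {(3 : Zomega)}) :
    (3 : ℤ) ∣ n := by
  rw [Ideal.mem_span_singleton] at h
  obtain ⟨z, hz⟩ := h
  have h3 : (3 : S3) = 0 := by
    have h := map_ofNat (algebraMap (ZMod 3) S3) 3
    rw [show (3 : ZMod 3) = 0 by decide, map_zero] at h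
    exact h.symm
  have hn : (n : S3) = 0 := by
    have h := congrArg phi hz
    rw [map_intCast, map_mul] at h
    have h3' : phi (3 : Zomega) = 0 := by
      rw [show (3 : Zomega) = ((3 : ℤ) : Zomega) by norm_num, map_intCast]
      exact_mod_cast h3
    rw [h3', zero_mul] at h
    exact h
  have hmk : (AdjoinRoot.mk ((X : (ZMod 3)[X]) ^ 4 + 1)) (Polynomial.C ((n : ZMod 3))) = 0 := by
    have hc : ((n : (ZMod 3)[X])) = Polynomial.C ((n : ZMod 3)) := by simp
    have h : (AdjoinRoot.mk ((X : (ZMod 3)[X]) ^ 4 + 1)) ((n : ℤ) : (ZMod 3)[X])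
        = ((n : ℤ) : S3) := map_intCast _ n
    rw [hc] at h
    rw [h]
    exact hn
  rw [AdjoinRoot.mk_eq_zero] at hmk
  have hdeg : (Polynomial.C ((n : ZMod 3))).degree < ((X : (ZMod 3)[X]) ^ 4 + 1).degree := by
    have he : ((X : (ZMod 3)[X]) ^ 4 + 1) = X ^ 4 + Polynomial.C 1 := by simp
    rw [he, Polynomial.degree_X_pow_add_C (by norm_num)]
    exact lt_of_le_of_lt Polynomial.degree_C_le (by norm_num)
  have hC := Polynomial.eq_zero_of_dvd_of_degree_lt hmk hdeg
  have hz3 : (n : ZMod 3) = 0 := Polynomial.C_eq_zero.mp hC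
  exact (ZMod.intCast_zmod_eq_zero_iff_dvd n 3).mp hz3

/-- For the ring homomorphism Ω : ℤ[A,A⁻¹] → ℤ[ω] with A ↦ ω, the ideal of ℤ[ω] generated
by the image of ⟨9, 4 + A⁴⟩, intersected with ℤ, equals 3ℤ. -/
theorem image_ideal_A : ∀ Ω : LaurentPolynomial ℤ →+* Zomega, Ω (T 1) = omega →
    Ideal.comap (Int.castRingHom Zomega)
      (Ideal.map Ω (Ideal.span ({9, 4 + T 4} : Set (LaurentPolynomial ℤ)))) =
      Ideal.span {(3 : ℤ)} := by
  intro Ω hΩ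
  have hT4 : Ω (T 4) = omega ^ 4 := by
    rw [show (T 4 : LaurentPolynomial ℤ) = T 1 ^ 4 by rw [T_pow]; norm_num,
      map_pow, hΩ]
  have hmap : Ideal.map Ω (Ideal.span ({9, 4 + T 4} : Set (LaurentPolynomial ℤ))) =
      Ideal.span {(3 : Zomega)} := by
    rw [Ideal.map_span, Set.image_insert_eq, Set.image_singleton]
    have h1 : Ω 9 = (9 : Zomega) := map_ofNat Ω 9
    have h2 : Ω (4 + T 4) = (3 : Zomega) := by
      rw [map_add, hT4, omega_pow_four, map_ofNat]
      ring
    rw [h1, h2]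
    apply le_antisymm
    · rw [Ideal.span_le]
      intro x hx
      rcases hx with h | h
      · rw [h]
        exact Ideal.mem_span_singleton.mpr ⟨3, by norm_num⟩
      · rw [Set.mem_singleton_iff] at h
        rw [h]
        exact Ideal.mem_span_singleton.mpr ⟨1, by norm_num⟩
    · rw [Ideal.span_le]
      intro x hx
      rw [Set.mem_singleton_iff] at hx
      rw [hx]
      exact Ideal.subset_span (by simp)
  rw [hmap]
  ext n
  simp only [Ideal.mem_comap, Int.coe_castRingHom]
  constructor
  · intro h
    exact Ideal.mem_span_singleton.mpr (intCast_mem_span_three n h)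
  · intro h
    obtain ⟨k, rfl⟩ := Ideal.mem_span_singleton.mp h
    refine Ideal.mem_span_singleton.mpr ⟨(k : Zomega), ?_⟩
    push_cast
    ring
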